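/- arXiv:1408.4673 — 4 statements merged into one kernel-verified Lean document; each statement's English description precedes it below -/
import Mathlib

section
/- Every Horn function (a Boolean function representable as a conjunction of Horn clauses) has at least one representing formula in normal form, i.e., a conjunction of clauses (αᵢ → βᵢ) with αᵢ, βᵢ sets of variables such that (1) all antecedents αᵢ are pairwise distinct, (2) αᵢ ⊂ βᵢ (proper subset) for each i, and (3) for all i, j, the assignment setting exactly the variables in αⱼ to true satisfies the clause αᵢ → βᵢ. -/
open scoped Classical

variable {V : Type*} [DecidableEq V] [Fintype V]

/-- A Horn clause `α → β`: pair of antecedent and consequent variable sets. -/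
abbrev Clause (V : Type*) := Finset V × Finset V

/-- A Horn formula: a finite set of clauses. -/
abbrev Form (V : Type*) := Finset (Clause V)

/-- Assignment `x` (set of true variables) satisfies clause `α → β`. -/
def Sat (c : Clause V) (x : Finset V) : Prop := c.1 ⊆ x → c.2 ⊆ x

/-- Assignment satisfies a formula iff it satisfies every clause. -/
def SatF (H : Form V) (x : Finset V) : Prop := ∀ c ∈ H, Sat c x

/-- Normal form: pairwise distinct antecedents, `α ⊂ β` per clause,
and each antecedent (as an assignment) satisfies every other clause. -/
def IsNormal (H : Form V) : Prop :=
  (∀ c ∈ H, ∀ c' ∈ H, c.1 = c'.1 → c = c') ∧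
  (∀ c ∈ H, c.1 ⊂ c.2) ∧
  (∀ c ∈ H, ∀ c' ∈ H, c ≠ c' → Sat c c'.1)

/-- Indexed version of normal form for clauses `α i → β i`, `i : Fin m`. -/
def IsNormalIdx {m : ℕ} (α β : Fin m → Finset V) : Prop :=
  Function.Injective α ∧ (∀ i, α i ⊂ β i) ∧
  ∀ i j, i ≠ j → α i ⊆ α j → β i ⊆ α j

/-- Closure of `x` under the formula `H`: intersection of all models containing `x`. -/
noncomputable def cl (H : Form V) (x : Finset V) : Finset V :=
  Finset.univ.filter (fun v => ∀ y : Finset V, SatF H y → x ⊆ y → v ∈ y)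

lemma subset_cl (H : Form V) (x : Finset V) : x ⊆ cl H x := by
  intro v hv
  simp only [cl, Finset.mem_filter, Finset.mem_univ, true_and]
  exact fun y _ hxy => hxy hv

lemma cl_subset (H : Form V) {x y : Finset V} (hy : SatF H y) (hxy : x ⊆ y) :
    cl H x ⊆ y := by
  intro v hv
  simp only [cl, Finset.mem_filter, Finset.mem_univ, true_and] at hv
  exact hv y hy hxy

lemma satF_cl (H : Form V) (x : Finset V) : SatF H (cl H x) := by
  intro c hc hsub v hv
  simp only [cl, Finset.mem_filter, Finset.mem_univ, true_and]
  intro y hy hxy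
  exact hy c hc (hsub.trans (cl_subset H hy hxy)) hv

lemma satF_iff_cl_eq (H : Form V) (x : Finset V) : SatF H x ↔ cl H x = x := by
  constructor
  · intro h
    exact Finset.Subset.antisymm (cl_subset H h subset_rfl) (subset_cl H x)
  · intro h
    rw [← h]; exact satF_cl H x

/-- Pseudo-closed sets of the closure operator induced by `H`. -/
def PC (H : Form V) (x : Finset V) : Prop :=
  cl H x ≠ x ∧ ∀ y, y ⊂ x → PC H y → cl H y ⊆ x
termination_by x.card
decreasing_by exact Finset.card_lt_card ‹_›

lemma PC_iff (H : Form V) (x : Finset V) :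
    PC H x ↔ cl H x ≠ x ∧ ∀ y, y ⊂ x → PC H y → cl H y ⊆ x := by
  rw [PC]

/-- every Horn function (function represented by some Horn formula)
has at least one representing formula in normal form. -/
theorem exists_normal_form (H : Form V) :
    ∃ H' : Form V, IsNormal H' ∧ ∀ x : Finset V, SatF H' x ↔ SatF H x := by
  refine ⟨(Finset.univ.filter (PC H)).image (fun x => (x, cl H x)), ?_, ?_⟩
  · have hmem : ∀ c : Clause V,
        c ∈ (Finset.univ.filter (PC H)).image (fun x => (x, cl H x)) ↔
        PC H c.1 ∧ c.2 = cl H c.1 := by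
      intro c
      simp only [Finset.mem_image, Finset.mem_filter, Finset.mem_univ, true_and]
      constructor
      · rintro ⟨x, hx, rfl⟩; exact ⟨hx, rfl⟩
      · rintro ⟨h1, h2⟩; exact ⟨c.1, h1, by rw [← h2]⟩
    refine ⟨?_, ?_, ?_⟩
    · intro c hc c' hc' h
      rw [hmem] at hc hc'
      have : c.2 = c'.2 := by rw [hc.2, hc'.2, h]
      exact Prod.ext h this
    · intro c hc
      rw [hmem] at hc
      rw [hc.2]
      exact Finset.ssubset_iff_subset_ne.mpr ⟨subset_cl H c.1,
        fun h => ((PC_iff H c.1).mp hc.1).1 h.symm⟩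
    · intro c hc c' hc' hne hsub
      rw [hmem] at hc hc'
      have hne1 : c.1 ≠ c'.1 := by
        intro h; exact hne (Prod.ext h (by rw [hc.2, hc'.2, h]))
      have hss : c.1 ⊂ c'.1 := Finset.ssubset_iff_subset_ne.mpr ⟨hsub, hne1⟩
      rw [hc.2]
      exact ((PC_iff H c'.1).mp hc'.1).2 c.1 hss hc.1
  · intro x
    constructor
    · intro hx
      rw [satF_iff_cl_eq]
      by_contra hne
      have hpc : PC H x := by
        rw [PC_iff]
        refine ⟨hne, fun y hy hpcy => ?_⟩
        exact hx (y, cl H y)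
          (Finset.mem_image.mpr ⟨y, Finset.mem_filter.mpr ⟨Finset.mem_univ _, hpcy⟩, rfl⟩)
          hy.subset
      have := hx (x, cl H x)
        (Finset.mem_image.mpr ⟨x, Finset.mem_filter.mpr ⟨Finset.mem_univ _, hpc⟩, rfl⟩)
        subset_rfl
      exact hne (Finset.Subset.antisymm this (subset_cl H x))
    · intro hx c hc hsub
      simp only [Finset.mem_image, Finset.mem_filter, Finset.mem_univ, true_and] at hc
      obtain ⟨p, _, rfl⟩ := hc
      exact cl_subset H hx hsub
end

section
/- For every Horn formula, the normalization procedure — repeatedly (a) merging clauses with equal antecedents (taking the union of consequents) and (b) replacing a clause α → β by (α ∪ γ) → β whenever another clause κ → γ has κ ⊂ α, then (c) deleting clauses with β ⊆ α and (d) replacing each remaining clause α → β by α → (α ∪ β) — terminates after finitely many iterations. -/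
open scoped Classical

variable {V : Type*} [DecidableEq V] [Fintype V]

/-- Merge step (a): replace two clauses with equal antecedents by their union. -/
def MergeStep (H H' : Form V) : Prop :=
  ∃ c₁ c₂ : Clause V, c₁ ∈ H ∧ c₂ ∈ H ∧ c₁ ≠ c₂ ∧ c₁.1 = c₂.1 ∧
    H' = insert (c₁.1, c₁.2 ∪ c₂.2) ((H.erase c₁).erase c₂)

/-- Absorb step (b): if `κ ⊂ α` for clauses `κ → γ` and `α → β`,
replace `α → β` by `(α ∪ γ) → β`. -/
def AbsorbStep (H H' : Form V) : Prop :=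
  ∃ c k : Clause V, c ∈ H ∧ k ∈ H ∧ k.1 ⊂ c.1 ∧
    H' = insert (c.1 ∪ k.2, c.2) (H.erase c)


/-- Weight of a clause: complements the antecedent size. -/
def wt (c : Clause V) : ℕ := Fintype.card V + 1 - c.1.card

lemma wt_pos (c : Clause V) : 1 ≤ wt c := by
  have := Finset.card_le_univ c.1
  unfold wt; omega

lemma sum_insert_le' (a : Clause V) (s : Form V) :
    ∑ x ∈ insert a s, wt x ≤ wt a + ∑ x ∈ s, wt x := by
  by_cases h : a ∈ s
  · rw [Finset.insert_eq_self.mpr h]; exact Nat.le_add_left _ _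
  · rw [Finset.sum_insert h]

lemma merge_decrease {H H' : Form V} (h : MergeStep H H') :
    ∑ c ∈ H', wt c < ∑ c ∈ H, wt c := by
  obtain ⟨c₁, c₂, h1, h2, hne, heq, rfl⟩ := h
  have h2' : c₂ ∈ H.erase c₁ := Finset.mem_erase.mpr ⟨fun he => hne he.symm, h2⟩
  have e1 : ∑ c ∈ (H.erase c₁).erase c₂, wt c + wt c₂ = ∑ c ∈ H.erase c₁, wt c :=
    Finset.sum_erase_add _ _ h2'
  have e2 : ∑ c ∈ H.erase c₁, wt c + wt c₁ = ∑ c ∈ H, wt c :=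
    Finset.sum_erase_add _ _ h1
  have hle : ∑ c ∈ insert (c₁.1, c₁.2 ∪ c₂.2) ((H.erase c₁).erase c₂), wt c ≤
      wt (c₁.1, c₁.2 ∪ c₂.2) + ∑ c ∈ (H.erase c₁).erase c₂, wt c :=
    sum_insert_le' _ _
  have hw : wt (c₁.1, c₁.2 ∪ c₂.2) = wt c₁ := rfl
  have := wt_pos c₂
  omega

lemma absorb_decrease {H H' : Form V} (h : AbsorbStep H H') (hne : H' ≠ H) :
    ∑ c ∈ H', wt c < ∑ c ∈ H, wt c := by
  obtain ⟨c, k, hc, hk, hsub, rfl⟩ := h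
  have hgrow : c.1 ≠ c.1 ∪ k.2 := by
    intro he
    apply hne
    have : ((c.1 ∪ k.2, c.2) : Clause V) = c := by
      rw [← he]
    rw [this, Finset.insert_erase hc]
  have hss : c.1 ⊂ c.1 ∪ k.2 :=
    (Finset.ssubset_iff_subset_ne).mpr ⟨Finset.subset_union_left, hgrow⟩
  have hcard : c.1.card < (c.1 ∪ k.2).card := Finset.card_lt_card hss
  have hN : (c.1 ∪ k.2).card ≤ Fintype.card V := Finset.card_le_univ _
  have e : ∑ x ∈ H.erase c, wt x + wt c = ∑ x ∈ H, wt x :=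
    Finset.sum_erase_add _ _ hc
  have hle : ∑ x ∈ insert (c.1 ∪ k.2, c.2) (H.erase c), wt x ≤
      wt (c.1 ∪ k.2, c.2) + ∑ x ∈ H.erase c, wt x :=
    sum_insert_le' _ _
  have hw : wt (c.1 ∪ k.2, c.2) < wt c := by unfold wt; simp only; omega
  omega

/-- the iteration of steps (a) and (b) of the normalization procedure
(each iteration actually changing the formula) terminates: there is no infinite
sequence of proper steps. -/
theorem normalization_terminates (H : Form V) :
    ¬ ∃ f : ℕ → Form V, f 0 = H ∧
      ∀ n : ℕ, (MergeStep (f n) (f (n + 1)) ∨ AbsorbStep (f n) (f (n + 1))) ∧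
        f (n + 1) ≠ f n := by
  rintro ⟨f, hf0, hstep⟩
  set g : ℕ → ℕ := fun n => ∑ c ∈ f n, wt c with hg
  have hdec : ∀ n, g (n + 1) < g n := by
    intro n
    rcases (hstep n).1 with h | h
    · exact merge_decrease h
    · exact absorb_decrease h (hstep n).2
  have hbound : ∀ n, g n + n ≤ g 0 := by
    intro n
    induction n with
    | zero => omega
    | succ m ih => have := hdec m; omega
  have := hbound (g 0 + 1)
  omega
end

section
/- The output of the normalization procedure is in normal form: its antecedents are pairwise distinct, each clause satisfies α ⊂ β, and every antecedent, viewed as an assignment, satisfies every clause of the output formula. -/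
open scoped Classical

variable {V : Type*} [DecidableEq V] [Fintype V]

/-- at a fixpoint of steps (a) and (b), performing steps (c)
(deleting trivial clauses) and (d) (closing consequents under antecedents)
yields a formula in normal form. -/
theorem normalization_output_normal (H : Form V)
    (ha : ∀ c ∈ H, ∀ c' ∈ H, c.1 = c'.1 → c = c')  -- fixpoint of (a)
    (hb : ∀ c ∈ H, ∀ k ∈ H, k.1 ⊂ c.1 → k.2 ⊆ c.1)  -- fixpoint of (b)
    :
    IsNormal ((H.filter (fun c => ¬ c.2 ⊆ c.1)).image (fun c => (c.1, c.1 ∪ c.2))) := by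
  refine ⟨?_, ?_, ?_⟩
  · rintro c hc c' hc' h
    simp only [Finset.mem_image, Finset.mem_filter] at hc hc'
    obtain ⟨a, ⟨haH, -⟩, rfl⟩ := hc
    obtain ⟨b, ⟨hbH, -⟩, rfl⟩ := hc'
    simp only at h ⊢
    rw [ha a haH b hbH h]
  · rintro c hc
    simp only [Finset.mem_image, Finset.mem_filter] at hc
    obtain ⟨a, ⟨haH, hns⟩, rfl⟩ := hc
    simp only
    constructor
    · exact Finset.subset_union_left
    · intro hsub
      exact hns fun x hx => hsub (Finset.mem_union_right _ hx)
  · rintro c hc c' hc' hne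
    simp only [Finset.mem_image, Finset.mem_filter] at hc hc'
    obtain ⟨a, ⟨haH, -⟩, rfl⟩ := hc
    obtain ⟨b, ⟨hbH, -⟩, rfl⟩ := hc'
    intro hsub
    simp only at hsub hne ⊢
    have hss : a.1 ⊂ b.1 := by
      refine ⟨hsub, fun hsub' => ?_⟩
      exact hne (by rw [ha a haH b hbH (Finset.Subset.antisymm hsub hsub')])
    have := hb b hbH a haH hss
    exact Finset.union_subset hsub this
end

section
/- Let H* be a normal-form Horn formula whose clauses are indexed so that antecedents of smaller cardinality have smaller index. If an assignment z satisfies: αᵢ ⊆ z, βᵢ ⊄ z, and for every k with α_k ⊄ αᵢ we have α_k ⊄ z, then the only clause of H* with index ≤ i that z falsifies is clause i. -/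
open scoped Classical

variable {V : Type*} [DecidableEq V] [Fintype V]

/-- with clauses indexed so that smaller antecedents come first,
if `z` contains `αᵢ`, misses part of `βᵢ`, and contains no `α_k` with
`α_k ⊄ αᵢ`, then the only clause of index `≤ i` falsified by `z` is clause `i`. -/
theorem ordered_counterexample_unique {m : ℕ} (α β : Fin m → Finset V)
    (hN : IsNormalIdx α β)
    (hord : ∀ j k : Fin m, j < k → (α j).card ≤ (α k).card)
    (i : Fin m) (z : Finset V)
    (h1 : α i ⊆ z) (h2 : ¬ β i ⊆ z)
    (h3 : ∀ k : Fin m, ¬ α k ⊆ α i → ¬ α k ⊆ z) :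
    ∀ j : Fin m, j ≤ i → ¬ Sat (α j, β j) z → j = i := by
  intro j _ hns
  by_contra hji
  have hαz : α j ⊆ z := by
    by_contra h
    exact hns (fun hc => absurd hc h)
  have hαi : α j ⊆ α i := by
    by_contra h
    exact h3 j h hαz
  have hβ : β j ⊆ α i := hN.2.2 j i hji hαi
  exact hns (fun _ => hβ.trans h1)
end
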